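/- arXiv:2208.11573 — 11 statements merged into one kernel-verified Lean document; each statement's English description precedes it below -/
import Mathlib

section
/- If A_1, …, A_h are r-element sets and B_1, …, B_h are s-element sets such that (a) A_i ∩ B_i = ∅ for every i = 1, …, h, and (b) A_i ∩ B_j ≠ ∅ whenever 1 ≤ i < j ≤ h, then h ≤ C(r+s, r), the binomial coefficient. (Skew version of Bollobás's set-pair theorem.) -/
/-!
Label the points by distinct rationals `c x`. To `Aᵢ` attach the product `gᵢ` of the linear
forms `∑ₖ (c a)ᵏ Xₖ`, `a ∈ Aᵢ`, a homogeneous polynomial of degree `r` in `s + 1` variables; to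
`Bⱼ` attach the polynomial `qⱼ = ∏_{b ∈ Bⱼ} (t - c b)` of degree `s`. Evaluating `gᵢ` at the
coefficient vector of `qⱼ` gives `∏_{a ∈ Aᵢ} qⱼ(c a)`, which vanishes for `i < j` and not for
`i = j`. This triangular pattern makes the `gᵢ` linearly independent in a space of dimension
`C(r + s, r)`.
-/

open Finset MvPolynomial

theorem MvPolynomial.finrank_homogeneousSubmodule {σ R : Type*} [Fintype σ] [CommRing R]
    [Nontrivial R] (n : ℕ) :
    Module.finrank R (homogeneousSubmodule σ R n) = (Fintype.card σ + n - 1).choose n := by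
  classical
  have hset : {d : σ →₀ ℕ | d.degree = n} = ((univ : Finset σ).finsuppAntidiag n : Set _) := by
    ext d
    simp [Finsupp.degree_eq_sum]
  rw [homogeneousSubmodule_eq_finsupp_supported]
  refine (Module.finrank_eq_nat_card_basis
    (basisRestrictSupport R {d : σ →₀ ℕ | d.degree = n})).trans ?_
  rw [hset, Nat.card_coe_set_eq, Set.ncard_coe_finset, card_finsuppAntidiag_nat_eq_choose,
    card_univ]

theorem linearIndependent_of_triangular {ι R V : Type*} [Fintype ι] [LinearOrder ι] [CommRing R]
    [IsDomain R] [AddCommGroup V] [Module R V] (v : ι → V) (φ : ι → Module.Dual R V)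
    (hdiag : ∀ i, φ i (v i) ≠ 0) (htri : ∀ i j, i < j → φ j (v i) = 0) :
    LinearIndependent R v := by
  classical
  let M : Matrix ι ι R := .of fun i j => φ j (v i)
  have hdet : M.det ≠ 0 := by
    rw [Matrix.det_of_isLowerTriangular M fun i j hij => htri i j hij]
    exact prod_ne_zero_iff.mpr fun i _ => hdiag i
  exact .of_comp (LinearMap.pi φ) (Matrix.linearIndependent_rows_of_det_ne_zero hdet)

section MomentForm

variable {K : Type*} [CommRing K] (s : ℕ)

noncomputable def momentForm (x : K) : MvPolynomial (Fin (s + 1)) K :=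
  ∑ k : Fin (s + 1), C (x ^ (k : ℕ)) * X k

theorem isHomogeneous_momentForm (x : K) : (momentForm s x).IsHomogeneous 1 :=
  .sum _ _ _ fun k _ => isHomogeneous_C_mul_X _ k

theorem eval_coeff_momentForm {q : Polynomial K} (hq : q.natDegree ≤ s) (x : K) :
    eval (fun k : Fin (s + 1) => q.coeff k) (momentForm s x) = q.eval x := by
  rw [Polynomial.eval_eq_sum_range' (Nat.lt_succ_of_le hq), ← Fin.sum_univ_eq_sum_range]
  simp [momentForm, mul_comm]

end MomentForm

theorem le_choose_of_skew_of_separating_labels {K α : Type*} [Field K] [DecidableEq α]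
    {h r s : ℕ} (A B : Fin h → Finset α) (c : α → K) (hA : ∀ i, #(A i) = r)
    (hB : ∀ i, #(B i) ≤ s) (hsep : ∀ i, ∀ a ∈ A i, ∀ b ∈ B i, c a ≠ c b)
    (hskew : ∀ i j, i < j → (A i ∩ B j).Nonempty) :
    h ≤ (r + s).choose r := by
  let V := homogeneousSubmodule (Fin (s + 1)) K r
  have : Module.Finite K V := Module.Finite.iff_fg.mpr (homogeneousSubmodule_fg _ _ r)
  let g (i : Fin h) : V := ⟨∏ a ∈ A i, momentForm s (c a),
    (mem_homogeneousSubmodule _ _).mpr <| by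
      simpa [hA i] using IsHomogeneous.prod (A i) _ (fun _ => 1) fun a _ =>
        isHomogeneous_momentForm s (c a)⟩
  let q (j : Fin h) : Polynomial K := ∏ b ∈ B j, (Polynomial.X - Polynomial.C (c b))
  have hq (j : Fin h) : (q j).natDegree ≤ s := by
    simpa [q, Polynomial.natDegree_prod_of_monic] using hB j
  let φ (j : Fin h) : Module.Dual K V :=
    (aeval fun k : Fin (s + 1) => (q j).coeff k).toLinearMap ∘ₗ V.subtype
  have hφ (i j : Fin h) : φ j (g i) = ∏ a ∈ A i, ∏ b ∈ B j, (c a - c b) := by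
    simp [φ, g, eval_coeff_momentForm s (hq j), q, Polynomial.eval_prod]
  have hg : LinearIndependent K g := by
    refine linearIndependent_of_triangular g φ (fun i => ?_) fun i j hij => ?_
    · rw [hφ]
      exact prod_ne_zero_iff.mpr fun a ha => prod_ne_zero_iff.mpr fun b hb =>
        sub_ne_zero.mpr (hsep i a ha b hb)
    · obtain ⟨x, hx⟩ := hskew i j hij
      rw [mem_inter] at hx
      rw [hφ]
      exact prod_eq_zero hx.1 (prod_eq_zero hx.2 (sub_self _))
  simpa [V, finrank_homogeneousSubmodule, add_comm s r] using hg.fintype_card_le_finrank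

/-- skew version of Bollobás's set-pair theorem: if `A 1, …, A h` are
`r`-element sets and `B 1, …, B h` are `s`-element sets with `A i ∩ B i = ∅` for all `i`
and `A i ∩ B j ≠ ∅` whenever `i < j`, then `h ≤ C(r+s, r)`. -/
theorem skew_bollobas {α : Type*} [DecidableEq α] (h r s : ℕ)
    (A B : Fin h → Finset α)
    (hA : ∀ i, (A i).card = r) (hB : ∀ i, (B i).card = s)
    (hdisj : ∀ i, A i ∩ B i = ∅)
    (hskew : ∀ i j, i < j → (A i ∩ B j).Nonempty) :
    h ≤ Nat.choose (r + s) r := by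
  let U := univ.biUnion fun i => A i ∪ B i
  obtain ⟨f, hf⟩ := Set.countable_iff_exists_injOn.mp U.countable_toSet
  refine le_choose_of_skew_of_separating_labels A B (fun x => (f x : ℚ)) hA (fun i => (hB i).le)
    (fun i a ha b hb hab => ?_) hskew
  have hab : a = b :=
    hf (mem_biUnion.mpr ⟨i, mem_univ _, mem_union_left _ ha⟩)
      (mem_biUnion.mpr ⟨i, mem_univ _, mem_union_right _ hb⟩) (Nat.cast_injective hab)
  exact notMem_empty a (hdisj i ▸ mem_inter.mpr ⟨ha, hab ▸ hb⟩)
end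

section
/- Given an (n,m)-system together with decomposition data, one has t < m and m ≤ |G|. -/
open Finset

/-- An `(n,m)`-system: a collection `N 1, …, N ℓ` of distinct `k`-element subsets of a
finite vertex set `V` of cardinality `n`, covering `V`, with `ℓ ≥ 2`, `k ≥ 3`,
satisfying the minimal-empty-intersection property (i) and the clique property (ii). -/
structure NMSystem (α : Type*) [DecidableEq α] where
  ell : ℕ
  k : ℕ
  V : Finset α
  N : Fin ell → Finset α
  h_ell : 2 ≤ ell
  h_k : 3 ≤ k
  h_inj : Function.Injective N
  h_card : ∀ i, (N i).card = k
  h_sub : ∀ i, N i ⊆ V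
  h_cover : ∀ v ∈ V, ∃ i, v ∈ N i
  h_empty_inter : ∀ v : α, ¬ (∀ i, v ∈ N i)
  h_min : ∀ i, ∃ v, ∀ j, j ≠ i → v ∈ N j
  h_clique : ∀ S ⊆ V, k + 1 ≤ S.card → ∃ T ⊆ S, T.card = 3 ∧ ∀ i, ¬ T ⊆ N i

namespace NMSystem

variable {α : Type*} [DecidableEq α]

/-- the number of vertices `n` -/
def n (S : NMSystem α) : ℕ := S.V.card

/-- the parameter `m = n - k` -/
def m (S : NMSystem α) : ℕ := S.n - S.k

end NMSystem

/-- Decomposition data for an `(n,m)`-system: stage numbers `t i` (weakly decreasing in `i`)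
with at least `4` surviving sets at each stage `j ≤ t = t 0`, together with pairwise
distinct kernel vertices `a i s` (for `s ≤ t i`) satisfying `a i s ∉ N i` and
`a i s ∈ N r` for every `r ≠ i` with `s ≤ t r`. -/
structure Decomp {α : Type*} [DecidableEq α] (S : NMSystem α) where
  t : Fin S.ell → ℕ
  a : Fin S.ell → ℕ → α
  h_mono : ∀ i j : Fin S.ell, i ≤ j → t j ≤ t i
  h_stages : ∀ j : ℕ, j ≤ t ⟨0, Nat.lt_of_lt_of_le Nat.zero_lt_two S.h_ell⟩ →
      4 ≤ (Finset.univ.filter (fun i => j ≤ t i)).card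
  h_a_mem : ∀ i s, s ≤ t i → a i s ∈ S.V
  h_a_not : ∀ i s, s ≤ t i → a i s ∉ S.N i
  h_a_in : ∀ i s, s ≤ t i → ∀ r, r ≠ i → s ≤ t r → a i s ∈ S.N r
  h_a_inj : ∀ i s i' s', s ≤ t i → s' ≤ t i' → (i ≠ i' ∨ s ≠ s') → a i s ≠ a i' s'

namespace Decomp

variable {α : Type*} [DecidableEq α] {S : NMSystem α} (D : Decomp S)

/-- the total number of stages `t = t_1` -/
def T : ℕ := D.t ⟨0, Nat.lt_of_lt_of_le Nat.zero_lt_two S.h_ell⟩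

/-- the set `A` of all kernel vertices -/
def A : Finset α :=
  Finset.univ.biUnion (fun i => (Finset.range (D.t i + 1)).image (D.a i))

/-- the set `G = V \ A` of garbage vertices -/
def G : Finset α := S.V \ D.A

/-- the critical time `t_g` of a vertex `g` -/
def tg (g : α) : ℕ := (Finset.univ.filter (fun i => g ∈ S.N i)).sup D.t

/-- the critical index set `I_g` of a vertex `g` -/
def Ig (g : α) : Finset (Fin S.ell) :=
  Finset.univ.filter (fun i => g ∈ S.N i ∧ D.t i = D.tg g)

/-- the set `Γ_x` of critical garbage vertices of `N x` -/
def Gamma (x : Fin S.ell) : Finset α := D.G.filter (fun g => D.Ig g = {x})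

/-- `v` is a private vertex for `N i` at time `j` -/
def IsPrivateVertex (i : Fin S.ell) (j : ℕ) (v : α) : Prop :=
  v ∈ S.N i ∧ ∀ r, r ≠ i → j ≤ D.t r → v ∉ S.N r

/-- `p` is a private pair for `N i` at time `j` -/
def IsPrivatePair (i : Fin S.ell) (j : ℕ) (p : Finset α) : Prop :=
  p ⊆ S.N i ∧ p.card = 2 ∧ ∀ r, r ≠ i → j ≤ D.t r → ¬ p ⊆ S.N r

/-- `C` is a `3`-cross of `N i` at time `j` with respect to `Y` -/
def IsThreeCross (i : Fin S.ell) (j : ℕ) (Y C : Finset α) : Prop :=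
  C.card = 3 ∧ C ⊆ (S.N i ∪ (Finset.range (j + 1)).image (D.a i)) \ Y ∧
    ∀ r, ¬ C ⊆ S.N r

end Decomp

/-- for any `(n,m)`-system with decomposition data, `t < m` and `m ≤ |G|`. -/
theorem t_lt_m_and_m_le_G {α : Type*} [DecidableEq α] (S : NMSystem α) (D : Decomp S) :
    D.T < S.m ∧ S.m ≤ D.G.card := by
  classical
  set i0 : Fin S.ell := ⟨0, Nat.lt_of_lt_of_le Nat.zero_lt_two S.h_ell⟩ with hi0
  have hkV : S.k ≤ S.V.card := by
    rw [← S.h_card i0]; exact Finset.card_le_card (S.h_sub i0)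
  -- Part 1 : T < m
  have hTm : D.T < S.m := by
    have hsub : (Finset.range (D.T + 1)).image (D.a i0) ⊆ S.V \ S.N i0 := by
      intro v hv
      simp only [Finset.mem_image, Finset.mem_range] at hv
      obtain ⟨s, hs, rfl⟩ := hv
      have hs' : s ≤ D.t i0 := Nat.lt_succ_iff.mp hs
      exact Finset.mem_sdiff.mpr ⟨D.h_a_mem i0 s hs', D.h_a_not i0 s hs'⟩
    have hcard : ((Finset.range (D.T + 1)).image (D.a i0)).card = D.T + 1 := by
      rw [Finset.card_image_of_injOn, Finset.card_range]
      intro s hs s' hs' h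
      by_contra hne
      exact D.h_a_inj i0 s i0 s' (Nat.lt_succ_iff.mp (Finset.mem_range.mp hs))
        (Nat.lt_succ_iff.mp (Finset.mem_range.mp hs')) (Or.inr hne) h
    have h1 : D.T + 1 ≤ (S.V \ S.N i0).card := by
      rw [← hcard]; exact Finset.card_le_card hsub
    rw [Finset.card_sdiff_of_subset (S.h_sub i0), S.h_card] at h1
    unfold NMSystem.m NMSystem.n
    omega
  -- A ⊆ V
  have hAsub : D.A ⊆ S.V := by
    intro v hv
    simp only [Decomp.A, Finset.mem_biUnion, Finset.mem_image, Finset.mem_range,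
      Finset.mem_univ, true_and] at hv
    obtain ⟨i, s, hs, rfl⟩ := hv
    exact D.h_a_mem i s (Nat.lt_succ_iff.mp hs)
  -- Part 2 : |A| ≤ k
  have hAk : D.A.card ≤ S.k := by
    by_contra h
    push_neg at h
    obtain ⟨T3, hT3A, hT3card, hT3⟩ := S.h_clique D.A hAsub h
    have hmem : ∀ v ∈ T3, ∃ i s, s ≤ D.t i ∧ D.a i s = v := by
      intro v hv
      have hv' := hT3A hv
      simp only [Decomp.A, Finset.mem_biUnion, Finset.mem_image, Finset.mem_range,
        Finset.mem_univ, true_and] at hv'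
      obtain ⟨i, s, hs, hv''⟩ := hv'
      exact ⟨i, s, Nat.lt_succ_iff.mp hs, hv''⟩
    obtain ⟨x, y, z, hxy, hxz, hyz, rfl⟩ := Finset.card_eq_three.mp hT3card
    obtain ⟨i1, s1, hs1, hx⟩ := hmem x (by simp)
    obtain ⟨i2, s2, hs2, hy⟩ := hmem y (by simp)
    obtain ⟨i3, s3, hs3, hz⟩ := hmem z (by simp)
    set s := max s1 (max s2 s3) with hsdef
    have hle1 : s1 ≤ s := le_max_left _ _
    have hle2 : s2 ≤ s := le_trans (le_max_left _ _) (le_max_right _ _)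
    have hle3 : s3 ≤ s := le_trans (le_max_right _ _) (le_max_right _ _)
    have hsT : s ≤ D.T := by
      have h1 : D.t i1 ≤ D.T := D.h_mono i0 i1 (Fin.mk_le_of_le_val (Nat.zero_le _))
      have h2 : D.t i2 ≤ D.T := D.h_mono i0 i2 (Fin.mk_le_of_le_val (Nat.zero_le _))
      have h3 : D.t i3 ≤ D.T := D.h_mono i0 i3 (Fin.mk_le_of_le_val (Nat.zero_le _))
      omega
    have h4 := D.h_stages s hsT
    have hr : ∃ r, s ≤ D.t r ∧ r ≠ i1 ∧ r ≠ i2 ∧ r ≠ i3 := by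
      by_contra hc
      push_neg at hc
      have hsub2 : (Finset.univ.filter (fun i => s ≤ D.t i)) ⊆ ({i1, i2, i3} : Finset (Fin S.ell)) := by
        intro r hrmem
        simp only [Finset.mem_filter, Finset.mem_univ, true_and] at hrmem
        simp only [Finset.mem_insert, Finset.mem_singleton]
        by_cases e1 : r = i1
        · exact Or.inl e1
        by_cases e2 : r = i2
        · exact Or.inr (Or.inl e2)
        exact Or.inr (Or.inr (hc r hrmem e1 e2))
      have := Finset.card_le_card hsub2
      have h3card : ({i1, i2, i3} : Finset (Fin S.ell)).card ≤ 3 := by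
        apply le_trans (Finset.card_insert_le _ _)
        have := Finset.card_insert_le i2 ({i3} : Finset (Fin S.ell))
        simp at this ⊢
        omega
      omega
    obtain ⟨r, hrs, hr1, hr2, hr3⟩ := hr
    apply hT3 r
    intro v hv
    simp only [Finset.mem_insert, Finset.mem_singleton] at hv
    rcases hv with rfl | rfl | rfl
    · exact hx ▸ D.h_a_in i1 s1 hs1 r hr1 (le_trans hle1 hrs)
    · exact hy ▸ D.h_a_in i2 s2 hs2 r hr2 (le_trans hle2 hrs)
    · exact hz ▸ D.h_a_in i3 s3 hs3 r hr3 (le_trans hle3 hrs)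
  have hGcard : D.G.card = S.V.card - D.A.card := by
    rw [Decomp.G, Finset.card_sdiff_of_subset hAsub]
  refine ⟨hTm, ?_⟩
  unfold NMSystem.m NMSystem.n
  rw [hGcard]
  omega
end

section
/- Given an (n,m)-system with decomposition data, suppose there exists a set of indices I ⊆ {1, …, ℓ} with |I| = 2 or |I| = 3 such that t_i = t for every i ∈ I and the sets N_i \ A (i ∈ I) have empty intersection. Then |G| ≤ 3(m − t − 1). -/
open Finset

/-- if some `2`- or `3`-element set `I` of indices satisfies `t i = t` for
all `i ∈ I` and the sets `N i \ A` (`i ∈ I`) have empty intersection, then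
`|G| ≤ 3(m - t - 1)`. -/
theorem G_card_upper_bound {α : Type*} [DecidableEq α] (S : NMSystem α) (D : Decomp S)
    (I : Finset (Fin S.ell)) (hI : I.card = 2 ∨ I.card = 3)
    (htI : ∀ i ∈ I, D.t i = D.T)
    (hinter : ∀ v : α, ¬ (∀ i ∈ I, v ∈ S.N i \ D.A)) :
    (D.G.card : ℤ) ≤ 3 * ((S.m : ℤ) - (D.T : ℤ) - 1) := by
  classical
  have h0 : 0 < I.card := by rcases hI with h | h <;> omega
  obtain ⟨i₀, hi₀⟩ := Finset.card_pos.mp h0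
  -- Key bound: for each i ∈ I, |G \ N i| + (T + 1) ≤ m
  have key : ∀ i ∈ I, (D.G \ S.N i).card + (D.T + 1) ≤ S.m := by
    intro i hi
    have hti : D.t i = D.T := htI i hi
    set K := (Finset.range (D.T + 1)).image (D.a i) with hK
    have hKcard : K.card = D.T + 1 := by
      rw [hK, Finset.card_image_of_injOn, Finset.card_range]
      intro s hs s' hs' h
      by_contra hne
      have hsle : s ≤ D.t i := by
        have := Finset.mem_range.mp hs; omega
      have hsle' : s' ≤ D.t i := by
        have := Finset.mem_range.mp hs'; omega
      exact D.h_a_inj i s i s' hsle hsle' (Or.inr hne) h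
    have hKA : K ⊆ D.A := by
      intro v hv
      obtain ⟨s, hs, rfl⟩ := Finset.mem_image.mp hv
      refine Finset.mem_biUnion.mpr ⟨i, Finset.mem_univ i, ?_⟩
      exact Finset.mem_image.mpr ⟨s, by rw [hti]; exact hs, rfl⟩
    have hdisj : Disjoint (D.G \ S.N i) K := by
      refine Finset.disjoint_left.mpr fun v hv hvK => ?_
      have hvG := (Finset.mem_sdiff.mp hv).1
      exact (Finset.mem_sdiff.mp hvG).2 (hKA hvK)
    have hsub : (D.G \ S.N i) ∪ K ⊆ S.V \ S.N i := by
      intro v hv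
      rcases Finset.mem_union.mp hv with hv | hv
      · rcases Finset.mem_sdiff.mp hv with ⟨hvG, hvN⟩
        exact Finset.mem_sdiff.mpr ⟨(Finset.mem_sdiff.mp hvG).1, hvN⟩
      · obtain ⟨s, hs, rfl⟩ := Finset.mem_image.mp hv
        have hsle : s ≤ D.t i := by
          have := Finset.mem_range.mp hs; omega
        exact Finset.mem_sdiff.mpr ⟨D.h_a_mem i s hsle, D.h_a_not i s hsle⟩
    have hcard : ((D.G \ S.N i) ∪ K).card ≤ (S.V \ S.N i).card :=
      Finset.card_le_card hsub
    rw [Finset.card_union_of_disjoint hdisj, hKcard] at hcard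
    have hV : (S.V \ S.N i).card = S.n - S.k := by
      rw [Finset.card_sdiff_of_subset (S.h_sub i), S.h_card i]; rfl
    have hkn : S.k ≤ S.n := by
      have := Finset.card_le_card (S.h_sub i)
      rw [S.h_card i] at this; exact this
    have hm : S.m = S.n - S.k := rfl
    omega
  -- G is covered by the sets G \ N i, i ∈ I
  have hcov : D.G ⊆ I.biUnion (fun i => D.G \ S.N i) := by
    intro g hg
    have hgA : g ∉ D.A := (Finset.mem_sdiff.mp hg).2
    have := hinter g
    push_neg at this
    obtain ⟨i, hiI, hgi⟩ := this
    refine Finset.mem_biUnion.mpr ⟨i, hiI, Finset.mem_sdiff.mpr ⟨hg, fun hN => ?_⟩⟩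
    exact hgi (Finset.mem_sdiff.mpr ⟨hN, hgA⟩)
  have h1 : D.G.card ≤ ∑ i ∈ I, (D.G \ S.N i).card :=
    le_trans (Finset.card_le_card hcov) Finset.card_biUnion_le
  have h2 : ∀ i ∈ I, ((D.G \ S.N i).card : ℤ) ≤ (S.m : ℤ) - D.T - 1 := by
    intro i hi
    have := key i hi
    omega
  have hm0 : 0 ≤ (S.m : ℤ) - D.T - 1 := by
    have := key i₀ hi₀; omega
  have hI3 : (I.card : ℤ) ≤ 3 := by rcases hI with h | h <;> simp [h]
  calc (D.G.card : ℤ) ≤ ∑ i ∈ I, ((D.G \ S.N i).card : ℤ) := by exact_mod_cast h1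
    _ ≤ ∑ _i ∈ I, ((S.m : ℤ) - D.T - 1) := Finset.sum_le_sum h2
    _ = I.card * ((S.m : ℤ) - D.T - 1) := by rw [Finset.sum_const, nsmul_eq_mul]
    _ ≤ 3 * ((S.m : ℤ) - D.T - 1) := mul_le_mul_of_nonneg_right hI3 hm0
end

section
/- Given an (n,m)-system with decomposition data, suppose j ≤ t_i and Y ⊆ N_i with |Y| ≤ j. Then there exists a 3-cross of N_i at time j with respect to Y, i.e., a 3-element set C ⊆ (N_i ∪ {a_i^{(0)}, …, a_i^{(j)}}) \ Y such that C ⊄ N_r for all r = 1, …, ℓ. -/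
open Finset

/-- for `j ≤ t i` and `Y ⊆ N i` with `|Y| ≤ j` there exists a `3`-cross of
`N i` at time `j` with respect to `Y`. -/
theorem three_cross_exists {α : Type*} [DecidableEq α]
    (S : NMSystem α) (D : Decomp S) (i : Fin S.ell) (j : ℕ) (hj : j ≤ D.t i)
    (Y : Finset α) (hY : Y ⊆ S.N i) (hYcard : Y.card ≤ j) :
    ∃ C : Finset α, D.IsThreeCross i j Y C := by
  set U : Finset α := S.N i ∪ (Finset.range (j + 1)).image (D.a i) with hU
  have himg : ((Finset.range (j + 1)).image (D.a i)).card = j + 1 := by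
    rw [Finset.card_image_of_injOn, Finset.card_range]
    intro s hs s' hs' hss
    by_contra hne
    exact D.h_a_inj i s i s'
      (le_trans (Nat.lt_succ_iff.mp (Finset.mem_range.mp hs)) hj)
      (le_trans (Nat.lt_succ_iff.mp (Finset.mem_range.mp hs')) hj)
      (Or.inr hne) hss
  have hdisj : Disjoint (S.N i) ((Finset.range (j + 1)).image (D.a i)) := by
    rw [Finset.disjoint_right]
    intro v hv
    obtain ⟨s, hs, rfl⟩ := Finset.mem_image.mp hv
    exact D.h_a_not i s (le_trans (Nat.lt_succ_iff.mp (Finset.mem_range.mp hs)) hj)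
  have hUcard : U.card = S.k + (j + 1) := by
    rw [hU, Finset.card_union_of_disjoint hdisj, S.h_card, himg]
  have hYU : Y ⊆ U := hY.trans Finset.subset_union_left
  have hcard : S.k + 1 ≤ (U \ Y).card := by
    rw [Finset.card_sdiff_of_subset hYU, hUcard]
    omega
  have hsub : U \ Y ⊆ S.V := by
    intro v hv
    rcases Finset.mem_union.mp (Finset.mem_sdiff.mp hv).1 with h | h
    · exact S.h_sub i h
    · obtain ⟨s, hs, rfl⟩ := Finset.mem_image.mp h
      exact D.h_a_mem i s (le_trans (Nat.lt_succ_iff.mp (Finset.mem_range.mp hs)) hj)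
  obtain ⟨T, hT, hT3, hTr⟩ := S.h_clique (U \ Y) hsub hcard
  exact ⟨T, hT3, hT, fun r h => hTr r h⟩
end

section
/- Given an (n,m)-system with decomposition data, suppose j ≤ t_i, Y ⊆ N_i with |Y| ≤ j, and C is a 3-cross of N_i at time j with respect to Y. Let p = C ∩ N_i. Then: (1) |p| = 1 or |p| = 2; (2) if |p| = 1, then the unique vertex of p lies in (N_i \ Y) ∩ G and is private for N_i at time j; (3) if |p| = 2, then p ⊆ N_i \ Y and p is a private pair for N_i at time j. -/
open Finset

/-- if `C` is a `3`-cross of `N i` at time `j` with respect to `Y` and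
`p = C ∩ N i`, then `|p| ∈ {1, 2}`; if `|p| = 1` its unique vertex lies in
`(N i \ Y) ∩ G` and is private for `N i` at time `j`; if `|p| = 2` then `p ⊆ N i \ Y`
and `p` is a private pair for `N i` at time `j`. -/
theorem three_cross_properties {α : Type*} [DecidableEq α]
    (S : NMSystem α) (D : Decomp S) (i : Fin S.ell) (j : ℕ) (hj : j ≤ D.t i)
    (Y : Finset α) (hY : Y ⊆ S.N i) (hYcard : Y.card ≤ j)
    (C : Finset α) (hC : D.IsThreeCross i j Y C) :
    ((C ∩ S.N i).card = 1 ∨ (C ∩ S.N i).card = 2) ∧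
    ((C ∩ S.N i).card = 1 →
      ∀ v ∈ C ∩ S.N i, v ∈ (S.N i \ Y) ∩ D.G ∧ D.IsPrivateVertex i j v) ∧
    ((C ∩ S.N i).card = 2 →
      C ∩ S.N i ⊆ S.N i \ Y ∧ D.IsPrivatePair i j (C ∩ S.N i)) := by
  obtain ⟨hc3, hsub, hcross⟩ := hC
  set p := C ∩ S.N i with hp
  have hzero : ∀ r : Fin S.ell, (⟨0, Nat.lt_of_lt_of_le Nat.zero_lt_two S.h_ell⟩ : Fin S.ell) ≤ r :=
    fun r => Fin.mk_le_of_le_val (Nat.zero_le _)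
  have hmem : ∀ c ∈ C, c ∉ Y ∧ (c ∈ S.N i ∨ ∃ s ≤ j, c = D.a i s) := by
    intro c hc
    have h := hsub hc
    rw [Finset.mem_sdiff, Finset.mem_union] at h
    refine ⟨h.2, ?_⟩
    rcases h.1 with h | h
    · exact Or.inl h
    · right
      obtain ⟨s, hs, hse⟩ := Finset.mem_image.mp h
      exact ⟨s, Nat.lt_succ_iff.mp (Finset.mem_range.mp hs), hse.symm⟩
  have hjT : j ≤ D.T := le_trans hj (D.h_mono _ i (hzero i))
  have hexists : ∀ s ≤ D.T, ∀ i1 i2 : Fin S.ell, ∃ r, s ≤ D.t r ∧ r ≠ i1 ∧ r ≠ i2 := by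
    intro s hs i1 i2
    have h4 := D.h_stages s hs
    by_contra h
    push_neg at h
    have hss : (Finset.univ.filter (fun r => s ≤ D.t r)) ⊆ {i1, i2} := by
      intro r hr
      rw [Finset.mem_filter] at hr
      by_cases hr1 : r = i1
      · simp [hr1]
      · simp [h r hr.2 hr1]
    have hle := Finset.card_le_card hss
    have h2 : ({i1, i2} : Finset (Fin S.ell)).card ≤ 2 :=
      le_trans (Finset.card_insert_le _ _) (by simp)
    omega
  have hkey : ∀ r, r ≠ i → j ≤ D.t r → ¬ p ⊆ S.N r := by
    intro r hri hjr hps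
    apply hcross r
    intro c hc
    rcases (hmem c hc).2 with h | ⟨s, hs, rfl⟩
    · exact hps (Finset.mem_inter.mpr ⟨hc, h⟩)
    · exact D.h_a_in i s (hs.trans hj) r hri (hs.trans hjr)
  have hp_sub : p ⊆ C := Finset.inter_subset_left
  have hple : p.card ≤ 3 := le_trans (Finset.card_le_card hp_sub) hc3.le
  have hpne3 : p.card ≠ 3 := by
    intro h3
    have hpc : p = C := Finset.eq_of_subset_of_card_le hp_sub (by omega)
    apply hcross i
    rw [← hpc]
    exact Finset.inter_subset_right
  have hpne0 : p.card ≠ 0 := by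
    intro h0
    obtain ⟨r, hr, hri, -⟩ := hexists j hjT i i
    apply hkey r hri hr
    rw [Finset.card_eq_zero] at h0
    simp [h0]
  refine ⟨by omega, ?_, ?_⟩
  · intro h1 v hv
    have hpv : p = {v} := by
      obtain ⟨w, hw⟩ := Finset.card_eq_one.mp h1
      rw [hw] at hv
      rw [Finset.mem_singleton] at hv
      rw [hw, hv]
    have hvC : v ∈ C := (Finset.mem_inter.mp hv).1
    have hvN : v ∈ S.N i := (Finset.mem_inter.mp hv).2
    have hvY : v ∉ Y := (hmem v hvC).1
    have hpriv : D.IsPrivateVertex i j v := by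
      refine ⟨hvN, fun r hri hjr hvr => hkey r hri hjr ?_⟩
      rw [hpv]
      simpa using hvr
    refine ⟨Finset.mem_inter.mpr ⟨Finset.mem_sdiff.mpr ⟨hvN, hvY⟩, ?_⟩, hpriv⟩
    rw [Decomp.G, Finset.mem_sdiff]
    refine ⟨S.h_sub i hvN, fun hA => ?_⟩
    rw [Decomp.A, Finset.mem_biUnion] at hA
    obtain ⟨i', -, hA⟩ := hA
    obtain ⟨s', hs', hveq⟩ := Finset.mem_image.mp hA
    have hs'le : s' ≤ D.t i' := Nat.lt_succ_iff.mp (Finset.mem_range.mp hs')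
    have hi' : i' ≠ i := by
      rintro rfl
      exact D.h_a_not i' s' hs'le (hveq ▸ hvN)
    have hmaxT : max j s' ≤ D.T :=
      max_le hjT (le_trans hs'le (D.h_mono _ i' (hzero i')))
    obtain ⟨r, hr, hri, hri'⟩ := hexists (max j s') hmaxT i i'
    have hin : v ∈ S.N r := hveq ▸
      D.h_a_in i' s' hs'le r hri' (le_trans (le_max_right _ _) hr)
    exact hpriv.2 r hri (le_trans (le_max_left _ _) hr) hin
  · intro h2
    have hsub' : p ⊆ S.N i \ Y := fun v hv =>
      Finset.mem_sdiff.mpr ⟨(Finset.mem_inter.mp hv).2, (hmem v (Finset.mem_inter.mp hv).1).1⟩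
    exact ⟨hsub', ⟨Finset.inter_subset_right, h2, fun r hri hjr => hkey r hri hjr⟩⟩
end

section
/- Given an (n,m)-system with decomposition data, suppose j ≤ t_i and Y ⊆ N_i with |Y| ≤ j. Then there exists a private pair p ⊆ N_i \ Y for N_i at time j such that either p is a subset of some 3-cross of N_i at time j with respect to Y, or p contains a vertex that is private for N_i at time j. -/
/-!
The kernel vertices `a_i^{(0)}, …, a_i^{(j)}` lie outside `N_i` but inside every other `N_r`
alive at time `j`. Adding them to `N_i \ Y` gives a set of more than `k` vertices, so property
(ii) yields a 3-cross `C` of `N_i` at time `j` with respect to `Y`. Since the part of `C`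
outside `N_i` consists of kernel vertices, `C ∩ N_i` lies in no other surviving `N_r`; it is
nonempty and misses a vertex of `C`, so it is a private pair inside `C`, or a private vertex
that together with any other vertex of `N_i \ Y` forms a private pair.
-/

open Finset

namespace Decomp

variable {α : Type*} [DecidableEq α] {S : NMSystem α} (D : Decomp S)

def kernel (i : Fin S.ell) (j : ℕ) : Finset α := (range (j + 1)).image (D.a i)

variable {D} {i r : Fin S.ell} {j : ℕ}

theorem mem_kernel {x : α} : x ∈ D.kernel i j ↔ ∃ s ≤ j, D.a i s = x := by
  simp [kernel]

theorem card_kernel (hj : j ≤ D.t i) : #(D.kernel i j) = j + 1 := by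
  rw [kernel, card_image_of_injOn, card_range]
  intro s hs s' hs' hss
  simp only [coe_range, Set.mem_Iio, Nat.lt_succ_iff] at hs hs'
  by_contra hne
  exact D.h_a_inj i s i s' (hs.trans hj) (hs'.trans hj) (Or.inr hne) hss

theorem kernel_subset_V (hj : j ≤ D.t i) : D.kernel i j ⊆ S.V := by
  intro _ hx
  obtain ⟨s, hs, rfl⟩ := mem_kernel.mp hx
  exact D.h_a_mem i s (hs.trans hj)

theorem disjoint_kernel_N (hj : j ≤ D.t i) : Disjoint (D.kernel i j) (S.N i) := by
  rw [disjoint_left]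
  rintro _ hx
  obtain ⟨s, hs, rfl⟩ := mem_kernel.mp hx
  exact D.h_a_not i s (hs.trans hj)

theorem kernel_subset_N (hj : j ≤ D.t i) (hr : r ≠ i) (hjr : j ≤ D.t r) :
    D.kernel i j ⊆ S.N r := by
  intro _ hx
  obtain ⟨s, hs, rfl⟩ := mem_kernel.mp hx
  exact D.h_a_in i s (hs.trans hj) r hr (hs.trans hjr)

theorem disjoint_kernel (hj : j ≤ D.t i) (hjr : j ≤ D.t r) (hr : r ≠ i) :
    Disjoint (D.kernel i j) (D.kernel r j) := by
  rw [disjoint_left]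
  rintro _ hx hx'
  obtain ⟨s, hs, rfl⟩ := mem_kernel.mp hx
  obtain ⟨s', hs', hss'⟩ := mem_kernel.mp hx'
  exact D.h_a_inj i s r s' (hs.trans hj) (hs'.trans hjr) (Or.inl hr.symm) hss'.symm

theorem exists_two_alive_ne (hj : j ≤ D.t i) :
    ∃ r₁ r₂, r₁ ≠ i ∧ r₂ ≠ i ∧ r₁ ≠ r₂ ∧ j ≤ D.t r₁ ∧ j ≤ D.t r₂ := by
  have hj₀ : j ≤ D.T := hj.trans (D.h_mono _ i (Nat.zero_le _))
  have hcard := (D.h_stages j hj₀).trans (card_le_card_sdiff_add_card (t := {i}))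
  rw [card_singleton] at hcard
  obtain ⟨r₁, hr₁, r₂, hr₂, hne⟩ := one_lt_card.mp
    (show 1 < #((univ.filter fun r => j ≤ D.t r) \ {i}) by omega)
  simp only [mem_sdiff, mem_filter, mem_univ, true_and, mem_singleton] at hr₁ hr₂
  exact ⟨r₁, r₂, hr₁.2, hr₂.2, hne, hr₁.1, hr₂.1⟩

theorem two_mul_succ_le_k (hj : j ≤ D.t i) : 2 * (j + 1) ≤ S.k := by
  obtain ⟨r₁, r₂, hr₁, hr₂, hne, hjr₁, hjr₂⟩ := exists_two_alive_ne hj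
  have hsub : D.kernel i j ∪ D.kernel r₂ j ⊆ S.N r₁ :=
    union_subset (kernel_subset_N hj hr₁ hjr₁) (kernel_subset_N hjr₂ hne hjr₁)
  have := card_le_card hsub
  rw [card_union_of_disjoint (disjoint_kernel hj hjr₂ hr₂), card_kernel hj, card_kernel hjr₂,
    S.h_card] at this
  omega

theorem isPrivatePair_pair {v w : α} (hv : D.IsPrivateVertex i j v) (hw : w ∈ S.N i)
    (hne : v ≠ w) : D.IsPrivatePair i j {v, w} :=
  ⟨insert_subset hv.1 (singleton_subset_iff.mpr hw), card_pair hne,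
    fun r hr hjr hsub => hv.2 r hr hjr (hsub (mem_insert_self v _))⟩

theorem inter_N_not_subset_N {C Y : Finset α} (hj : j ≤ D.t i) (hr : r ≠ i) (hjr : j ≤ D.t r)
    (hC : D.IsThreeCross i j Y C) : ¬ C ∩ S.N i ⊆ S.N r := by
  intro hsub
  refine hC.2.2 r fun x hx => ?_
  by_cases hxi : x ∈ S.N i
  · exact hsub (mem_inter.mpr ⟨hx, hxi⟩)
  · have hx' := (mem_sdiff.mp (hC.2.1 hx)).1
    exact kernel_subset_N hj hr hjr ((mem_union.mp hx').resolve_left hxi)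

theorem exists_privatePair_of_isThreeCross {C Y : Finset α} (hj : j ≤ D.t i) (hr : r ≠ i)
    (hjr : j ≤ D.t r) (hY : 2 ≤ #(S.N i \ Y)) (hC : D.IsThreeCross i j Y C) :
    ∃ p : Finset α, p ⊆ S.N i \ Y ∧ D.IsPrivatePair i j p ∧
      ((∃ C : Finset α, D.IsThreeCross i j Y C ∧ p ⊆ C) ∨
        (∃ v ∈ p, D.IsPrivateVertex i j v)) := by
  set P := C ∩ S.N i
  have hPpriv : ∀ r, r ≠ i → j ≤ D.t r → ¬ P ⊆ S.N r :=
    fun r hr hjr => inter_N_not_subset_N hj hr hjr hC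
  have hPY : P ⊆ S.N i \ Y := fun x hx =>
    mem_sdiff.mpr ⟨(mem_inter.mp hx).2, (mem_sdiff.mp (hC.2.1 (mem_inter.mp hx).1)).2⟩
  have hPpos : 0 < #P := card_pos.mpr (nonempty_iff_ne_empty.mpr fun h =>
    hPpriv r hr hjr (h ▸ empty_subset _))
  have hPC : P ⊂ C := Finset.ssubset_iff_subset_ne.mpr
    ⟨inter_subset_left, fun h => hC.2.2 i (h ▸ inter_subset_right)⟩
  have hPlt : #P < 3 := hC.1 ▸ card_lt_card hPC
  obtain hP | hP : #P = 1 ∨ #P = 2 := by omega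
  · obtain ⟨v, hPv⟩ := card_eq_one.mp hP
    have hv : D.IsPrivateVertex i j v := ⟨inter_subset_right (hPv ▸ mem_singleton_self v),
      fun r hr hjr hvr => hPpriv r hr hjr (hPv ▸ singleton_subset_iff.mpr hvr)⟩
    obtain ⟨w, hw, hwv⟩ := exists_mem_ne hY v
    exact ⟨{v, w},
      insert_subset (hPY (hPv ▸ mem_singleton_self v)) (singleton_subset_iff.mpr hw),
      isPrivatePair_pair hv (mem_sdiff.mp hw).1 hwv.symm, Or.inr ⟨v, mem_insert_self v _, hv⟩⟩
  · exact ⟨P, hPY, ⟨inter_subset_right, hP, hPpriv⟩, Or.inl ⟨C, hC, inter_subset_left⟩⟩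

theorem exists_isThreeCross {Y : Finset α} (hj : j ≤ D.t i) (hY : #Y ≤ j) :
    ∃ C, D.IsThreeCross i j Y C := by
  have hU : (S.N i ∪ D.kernel i j) \ Y ⊆ S.V :=
    sdiff_subset.trans (union_subset (S.h_sub i) (kernel_subset_V hj))
  have hUcard : S.k + 1 ≤ #((S.N i ∪ D.kernel i j) \ Y) := by
    have := le_card_sdiff Y (S.N i ∪ D.kernel i j)
    rw [card_union_of_disjoint (disjoint_kernel_N hj).symm, S.h_card, card_kernel hj] at this
    omega
  obtain ⟨C, hCU, hC3, hC⟩ := S.h_clique _ hU hUcard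
  exact ⟨C, hC3, hCU, hC⟩

end Decomp

open Decomp in
theorem private_pair_exists_general {α : Type*} [DecidableEq α]
    (S : NMSystem α) (D : Decomp S) (i : Fin S.ell) (j : ℕ) (hj : j ≤ D.t i)
    (Y : Finset α) (hYcard : Y.card ≤ j) :
    ∃ p : Finset α, p ⊆ S.N i \ Y ∧ D.IsPrivatePair i j p ∧
      ((∃ C : Finset α, D.IsThreeCross i j Y C ∧ p ⊆ C) ∨
        (∃ v ∈ p, D.IsPrivateVertex i j v)) := by
  obtain ⟨r, -, hr, -, -, hjr, -⟩ := exists_two_alive_ne hj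
  obtain ⟨C, hC⟩ := exists_isThreeCross hj hYcard
  have hk := two_mul_succ_le_k hj
  have hNY := le_card_sdiff Y (S.N i)
  rw [S.h_card] at hNY
  exact exists_privatePair_of_isThreeCross hj hr hjr (by omega) hC

/-- for `j ≤ t i` and `Y ⊆ N i` with `|Y| ≤ j` there is a private pair
`p ⊆ N i \ Y` for `N i` at time `j` such that either `p` is contained in some `3`-cross
of `N i` at time `j` with respect to `Y`, or `p` contains a vertex private for `N i`
at time `j`. -/
theorem private_pair_exists {α : Type*} [DecidableEq α]
    (S : NMSystem α) (D : Decomp S) (i : Fin S.ell) (j : ℕ) (hj : j ≤ D.t i)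
    (Y : Finset α) (hY : Y ⊆ S.N i) (hYcard : Y.card ≤ j) :
    ∃ p : Finset α, p ⊆ S.N i \ Y ∧ D.IsPrivatePair i j p ∧
      ((∃ C : Finset α, D.IsThreeCross i j Y C ∧ p ⊆ C) ∨
        (∃ v ∈ p, D.IsPrivateVertex i j v)) :=
  private_pair_exists_general S D i j hj Y hYcard
end

section
/- Given an (n,m)-system with decomposition data, suppose p = {g, a_x^{(y)}} is a problematic private pair for N_i at time j (that is, p is a private pair for N_i at time j with j ≤ t_i, g ∈ N_x, a_x^{(y)} a kernel vertex, and j ≤ y < t_x). Then: (1) i ≠ x; (2) for every index z, if g ∈ N_z and y ≤ t_z then z ∈ {i, x}; (3) I_g ⊆ {i, x}. -/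
open Finset

/-- if `p = {g, a x y}` is a problematic private pair for `N i` at time `j`
(`j ≤ t i`, `g ∈ N x`, `j ≤ y < t x`), then `i ≠ x`; every `z` with `g ∈ N z` and
`y ≤ t z` satisfies `z ∈ {i, x}`; and `I_g ⊆ {i, x}`. -/
theorem problematic_pair_properties {α : Type*} [DecidableEq α]
    (S : NMSystem α) (D : Decomp S) (i x : Fin S.ell) (j y : ℕ) (g : α)
    (hj : j ≤ D.t i) (hjy : j ≤ y) (hyx : y < D.t x)
    (hg : g ∈ S.N x)
    (hpriv : D.IsPrivatePair i j {g, D.a x y}) :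
    i ≠ x ∧
    (∀ z : Fin S.ell, g ∈ S.N z → y ≤ D.t z → z = i ∨ z = x) ∧
    D.Ig g ⊆ {i, x} := by

  obtain ⟨hsub, hcard, hpr⟩ := hpriv
  have hyx' : y ≤ D.t x := le_of_lt hyx
  have haNi : D.a x y ∈ S.N i := hsub (by simp)
  have hgNi : g ∈ S.N i := hsub (by simp)
  have hix : i ≠ x := by
    intro h; subst h
    exact D.h_a_not i y hyx' haNi
  have key : ∀ z : Fin S.ell, g ∈ S.N z → y ≤ D.t z → z = i ∨ z = x := by
    intro z hgz hyz
    by_contra hcon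
    push_neg at hcon
    obtain ⟨hzi, hzx⟩ := hcon
    have haz : D.a x y ∈ S.N z := D.h_a_in x y hyx' z hzx hyz
    exact hpr z hzi (le_trans hjy hyz) (by
      intro w hw
      simp only [Finset.mem_insert, Finset.mem_singleton] at hw
      rcases hw with rfl | rfl
      · exact hgz
      · exact haz)
  refine ⟨hix, key, ?_⟩
  intro z hz
  simp only [Decomp.Ig, Finset.mem_filter, Finset.mem_univ, true_and] at hz
  obtain ⟨hgz, htz⟩ := hz
  have htgx : D.t x ≤ D.tg g := by
    apply Finset.le_sup
    simp [hg]
  have : y ≤ D.t z := by omega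
  rcases key z hgz this with rfl | rfl <;> simp
end

section
/- Given an (n,m)-system with decomposition data and a family of private pairs with distinct anchors per set, let g ∈ G. Then: (1) if some pair p_i^{(j)} of the family is problematic with anchor g, then 1 ≤ |I_g| ≤ 2; (2) if |I_g| = 2, then at most two pairs of the family are problematic with anchor g; (3) if I_g = {z} for a single index z, then every pair p_i^{(j)} of the family that is problematic with anchor g satisfies either i = z (and at most one pair of the family with i = z has anchor g), or its non-anchor is a kernel vertex a_z^{(β)} for some β, which lies in V \ N_z. -/
open Finset

/-- A family of private pairs with distinct anchors per set: for every `i` and every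
stage `j ≤ t i` a private pair `p i j` for `N i` at time `j` together with a designated
anchor `g i j ∈ p i j ∩ G`, such that for fixed `i` the anchors are pairwise distinct. -/
structure PPFamily {α : Type*} [DecidableEq α] {S : NMSystem α} (D : Decomp S) where
  p : Fin S.ell → ℕ → Finset α
  g : Fin S.ell → ℕ → α
  h_priv : ∀ i j, j ≤ D.t i → D.IsPrivatePair i j (p i j)
  h_anchor_mem : ∀ i j, j ≤ D.t i → g i j ∈ p i j
  h_anchor_G : ∀ i j, j ≤ D.t i → g i j ∈ D.G
  h_anchor_inj : ∀ i j j', j ≤ D.t i → j' ≤ D.t i → j ≠ j' → g i j ≠ g i j'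

namespace PPFamily

variable {α : Type*} [DecidableEq α] {S : NMSystem α} {D : Decomp S} (F : PPFamily D)

/-- the pair `p i j` of the family is problematic with non-anchor `a x y` -/
def ProblematicWith (i : Fin S.ell) (j : ℕ) (x : Fin S.ell) (y : ℕ) : Prop :=
  y < D.t x ∧ j ≤ y ∧ F.g i j ∈ S.N x ∧ F.p i j = {F.g i j, D.a x y}

/-- the pair `p i j` of the family is problematic -/
def Problematic (i : Fin S.ell) (j : ℕ) : Prop :=
  ∃ x y, F.ProblematicWith i j x y

end PPFamily

namespace Decomp

variable {α : Type*} [DecidableEq α] {S : NMSystem α} (D : Decomp S)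

lemma t_le_tg {g : α} {x : Fin S.ell} (hx : g ∈ S.N x) : D.t x ≤ D.tg g :=
  Finset.le_sup (by simp [hx])

lemma Ig_nonempty {g : α} (hg : g ∈ S.V) : (D.Ig g).Nonempty := by
  obtain ⟨i₀, hi₀⟩ := S.h_cover g hg
  obtain ⟨i, hi, hsup⟩ := Finset.exists_mem_eq_sup (Finset.univ.filter (g ∈ S.N ·))
    ⟨i₀, by simp [hi₀]⟩ D.t
  exact ⟨i, by simp_all [Ig, tg]⟩

lemma a_mem_sdiff {x : Fin S.ell} {y : ℕ} (hy : y ≤ D.t x) : D.a x y ∈ S.V \ S.N x :=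
  Finset.mem_sdiff.mpr ⟨D.h_a_mem x y hy, D.h_a_not x y hy⟩

end Decomp

namespace PPFamily

variable {α : Type*} [DecidableEq α] {S : NMSystem α} {D : Decomp S} (F : PPFamily D)

lemma eq_of_g_eq {i : Fin S.ell} {j j' : ℕ} (hj : j ≤ D.t i) (hj' : j' ≤ D.t i)
    (h : F.g i j = F.g i j') : j = j' := by
  by_contra hne
  exact F.h_anchor_inj i j j' hj hj' hne h

lemma card_filter_g_eq_le_one (i : Fin S.ell) (g : α) :
    ((Finset.range (D.t i + 1)).filter (fun j => F.g i j = g)).card ≤ 1 := by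
  refine Finset.card_le_one.mpr fun j hj j' hj' => ?_
  simp only [Finset.mem_filter, Finset.mem_range, Nat.lt_succ_iff] at hj hj'
  exact F.eq_of_g_eq hj.1 hj'.1 (hj.2.trans hj'.2.symm)

/-- Any `r ∈ I_g` outside `{i, x}` has `y ≤ t x ≤ t_g = t r`, so `N r` contains both
`g` and `a x y` and the pair would not be private at time `j ≤ y`. -/
lemma Ig_subset_of_problematicWith {i x : Fin S.ell} {j y : ℕ} (hj : j ≤ D.t i)
    (hp : F.ProblematicWith i j x y) : D.Ig (F.g i j) ⊆ {i, x} := by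
  obtain ⟨hyx, hjy, hgx, hpair⟩ := hp
  intro r hr
  simp only [Decomp.Ig, Finset.mem_filter, Finset.mem_univ, true_and] at hr
  obtain ⟨hgr, htr⟩ := hr
  by_contra hrix
  simp only [Finset.mem_insert, Finset.mem_singleton, not_or] at hrix
  have hyr : y ≤ D.t r := by have := D.t_le_tg hgx; omega
  refine (F.h_priv i j hj).2.2 r hrix.1 (hjy.trans hyr) ?_
  rw [hpair, Finset.insert_subset_iff, Finset.singleton_subset_iff]
  exact ⟨hgr, D.h_a_in x y hyx.le r hrix.2 hyr⟩

lemma card_Ig_le_two_of_problematicWith {i x : Fin S.ell} {j y : ℕ} (hj : j ≤ D.t i)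
    (hp : F.ProblematicWith i j x y) : (D.Ig (F.g i j)).card ≤ 2 :=
  (Finset.card_le_card (F.Ig_subset_of_problematicWith hj hp)).trans Finset.card_le_two

lemma mem_Ig_of_problematicWith {i x : Fin S.ell} {j y : ℕ} (hj : j ≤ D.t i)
    (hp : F.ProblematicWith i j x y) (hcard : 2 ≤ (D.Ig (F.g i j)).card) :
    i ∈ D.Ig (F.g i j) := by
  by_contra hi
  have hsub : D.Ig (F.g i j) ⊆ {x} := fun r hr => by
    have := F.Ig_subset_of_problematicWith hj hp hr
    simp only [Finset.mem_insert, Finset.mem_singleton] at this ⊢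
    exact this.resolve_left (by rintro rfl; exact hi hr)
  have := (Finset.card_le_card hsub).trans (Finset.card_singleton x).le
  omega

open scoped Classical in
/-- Once `|I_g| ≥ 2`, every problematic pair with anchor `g` belongs to a set `N i` with
`i ∈ I_g`, and distinct anchors allow at most one such pair per set. -/
lemma card_problematic_le_card_Ig {g : α} (hcard : 2 ≤ (D.Ig g).card) :
    (((Finset.univ : Finset (Fin S.ell)).sigma fun i => Finset.range (D.t i + 1)).filter
        (fun q => F.Problematic q.1 q.2 ∧ F.g q.1 q.2 = g)).card ≤ (D.Ig g).card := by
  refine Finset.card_le_card_of_injOn Sigma.fst ?_ ?_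
  · rintro ⟨i, j⟩ hq
    simp only [Finset.mem_coe, Finset.mem_filter, Finset.mem_sigma, Finset.mem_univ, true_and,
      Finset.mem_range, Nat.lt_succ_iff] at hq
    obtain ⟨hj, ⟨x, y, hp⟩, rfl⟩ := hq
    exact F.mem_Ig_of_problematicWith hj hp hcard
  · rintro ⟨i, j⟩ hq ⟨i', j'⟩ hq' (rfl : i = i')
    simp only [Finset.mem_coe, Finset.mem_filter, Finset.mem_sigma, Finset.mem_univ, true_and,
      Finset.mem_range, Nat.lt_succ_iff] at hq hq'
    rw [F.eq_of_g_eq hq.1 hq'.1 (hq.2.2.trans hq'.2.2.symm)]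

end PPFamily

open scoped Classical in
/-- for a garbage vertex `g`: (1) if some pair of the family is
problematic with anchor `g`, then `1 ≤ |I_g| ≤ 2`; (2) if `|I_g| = 2`, then at most two
pairs of the family are problematic with anchor `g`; (3) if `I_g = {z}`, then every pair
of the family problematic with anchor `g` either belongs to `N z` (and at most one pair
for `N z` has anchor `g`), or has non-anchor a kernel vertex `a z β ∈ V \ N z`. -/
theorem anchor_trichotomy {α : Type*} [DecidableEq α]
    (S : NMSystem α) (D : Decomp S) (F : PPFamily D) (g : α) (hg : g ∈ D.G) :
    ((∃ i j, j ≤ D.t i ∧ F.Problematic i j ∧ F.g i j = g) →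
      1 ≤ (D.Ig g).card ∧ (D.Ig g).card ≤ 2) ∧
    ((D.Ig g).card = 2 →
      ((((Finset.univ : Finset (Fin S.ell)).sigma fun i => Finset.range (D.t i + 1)).filter
          (fun q => F.Problematic q.1 q.2 ∧ F.g q.1 q.2 = g)).card ≤ 2)) ∧
    (∀ z : Fin S.ell, D.Ig g = {z} →
      ∀ i x : Fin S.ell, ∀ j y : ℕ, j ≤ D.t i → F.ProblematicWith i j x y →
        F.g i j = g →
        (i = z ∧
          (((Finset.range (D.t z + 1)).filter (fun j' => F.g z j' = g)).card ≤ 1)) ∨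
        (x = z ∧ D.a x y ∈ S.V \ S.N z)) := by
  refine ⟨?_, fun hcard => ?_, fun z hz i x j y hj hp hgi => ?_⟩
  · rintro ⟨i, j, hj, ⟨x, y, hp⟩, rfl⟩
    exact ⟨Finset.card_pos.mpr (D.Ig_nonempty (Finset.mem_sdiff.mp hg).1),
      F.card_Ig_le_two_of_problematicWith hj hp⟩
  · exact (F.card_problematic_le_card_Ig hcard.ge).trans hcard.le
  · subst hgi
    have hz_mem : z ∈ ({i, x} : Finset (Fin S.ell)) :=
      F.Ig_subset_of_problematicWith hj hp (hz ▸ Finset.mem_singleton_self z)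
    rcases Finset.mem_insert.mp hz_mem with rfl | hxz
    · exact Or.inl ⟨rfl, F.card_filter_g_eq_le_one z _⟩
    · obtain rfl := (Finset.mem_singleton.mp hxz).symm
      exact Or.inr ⟨rfl, D.a_mem_sdiff hp.1.le⟩
end

section
/- Given an (n,m)-system with decomposition data, suppose p = {g, a_x^{(y)}} is a problematic private pair for N_i at time j (that is, p is a private pair for N_i at time j with j ≤ t_i, g ∈ N_x, a_x^{(y)} a kernel vertex, and j ≤ y < t_x), and suppose I_g = {i}. Then t_x < t_i, the pair {g, a_x^{(t_x)}} is a 2-element subset of N_i, and for every α with α ≥ y the pair {g, a_x^{(t_x)}} is a private pair for N_i at time α. -/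
open Finset

/-- if `p = {g, a x y}` is a problematic private pair for `N i` at time `j`
and `I_g = {i}`, then `t x < t i`, the replacement pair `{g, a x (t x)}` is a
`2`-element subset of `N i`, and it is a private pair for `N i` at every time `α ≥ y`. -/
theorem replacement_pair_private {α : Type*} [DecidableEq α]
    (S : NMSystem α) (D : Decomp S) (i x : Fin S.ell) (j y : ℕ) (g : α)
    (hj : j ≤ D.t i) (hjy : j ≤ y) (hyx : y < D.t x)
    (hg : g ∈ S.N x)
    (hpriv : D.IsPrivatePair i j {g, D.a x y})
    (hIg : D.Ig g = {i}) :
    D.t x < D.t i ∧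
    ({g, D.a x (D.t x)} : Finset α).card = 2 ∧
    ({g, D.a x (D.t x)} : Finset α) ⊆ S.N i ∧
    ∀ β : ℕ, y ≤ β → D.IsPrivatePair i β {g, D.a x (D.t x)} := by
  have hne : x ≠ i := by
    intro h
    have hax : D.a x y ∈ S.N i := hpriv.1 (by simp)
    exact D.h_a_not x y (le_of_lt hyx) (h ▸ hax)
  have hiI : i ∈ D.Ig g := by rw [hIg]; exact Finset.mem_singleton_self i
  have hgi : g ∈ S.N i ∧ D.t i = D.tg g := by
    simpa [Decomp.Ig] using hiI
  have htx_le : D.t x ≤ D.tg g := Finset.le_sup (by simp [hg])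
  have htxi : D.t x < D.t i := by
    rcases lt_or_eq_of_le (hgi.2 ▸ htx_le) with h | h
    · exact h
    · exfalso
      have hx : x ∈ D.Ig g := by simp [Decomp.Ig, hg, h, hgi.2]
      rw [hIg, Finset.mem_singleton] at hx
      exact hne hx
  have haxi : D.a x (D.t x) ∈ S.N i :=
    D.h_a_in x (D.t x) le_rfl i (Ne.symm hne) (le_of_lt htxi)
  have hgax : g ≠ D.a x (D.t x) := fun h => D.h_a_not x (D.t x) le_rfl (h ▸ hg)
  have hcard : ({g, D.a x (D.t x)} : Finset α).card = 2 := by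
    rw [Finset.card_insert_of_notMem (by simp [hgax]), Finset.card_singleton]
  have hsub : ({g, D.a x (D.t x)} : Finset α) ⊆ S.N i := by
    intro v hv
    simp only [Finset.mem_insert, Finset.mem_singleton] at hv
    rcases hv with h | h
    · exact h ▸ hgi.1
    · exact h ▸ haxi
  refine ⟨htxi, hcard, hsub, fun β hβ => ⟨hsub, hcard, ?_⟩⟩
  intro r hr hβr hsubr
  have hrx : r ≠ x := by
    intro h
    have hm : D.a x (D.t x) ∈ S.N r := hsubr (by simp)
    rw [h] at hm
    exact D.h_a_not x (D.t x) le_rfl hm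
  have haxy : D.a x y ∈ S.N r := D.h_a_in x y hyx.le r hrx (le_trans hβ hβr)
  have hgr : g ∈ S.N r := hsubr (by simp)
  refine hpriv.2.2 r hr (le_trans hjy (le_trans hβ hβr)) ?_
  intro v hv
  simp only [Finset.mem_insert, Finset.mem_singleton] at hv
  rcases hv with h | h
  · exact h ▸ hgr
  · exact h ▸ haxy
end

section
/- Given an (n,m)-system with decomposition data and a family of private pairs with distinct anchors per set, assume |G| ≤ 3m. Then the number of index pairs (i, j) with 0 ≤ j ≤ t_i such that p_i^{(j)} is problematic and its anchor g = g_i^{(j)} satisfies |I_g| = 2 is at most 6m. -/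
open Finset

open scoped Classical in
/-- Key lemma: if `p i j` is problematic with anchor of critical-index-set size 2,
then `i` belongs to that critical index set. -/
private lemma anchor_index_mem_Ig {α : Type*} [DecidableEq α]
    {S : NMSystem α} {D : Decomp S} (F : PPFamily D) {i : Fin S.ell} {j : ℕ}
    (hj : j ≤ D.t i) (hprob : F.Problematic i j)
    (hcard : (D.Ig (F.g i j)).card = 2) : i ∈ D.Ig (F.g i j) := by
  obtain ⟨x, y, hy, hjy, hgx, hp⟩ := hprob
  set g := F.g i j with hg
  -- I_g ⊆ {i, x}
  have hsub : D.Ig g ⊆ {i, x} := by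
    intro r hr
    by_contra hrix
    simp only [Finset.mem_insert, Finset.mem_singleton, not_or] at hrix
    obtain ⟨hri, hrx⟩ := hrix
    simp only [Decomp.Ig, Finset.mem_filter] at hr
    obtain ⟨-, hgr, htr⟩ := hr
    -- t r = tg g ≥ t x > y
    have htgx : D.t x ≤ D.tg g := by
      apply Finset.le_sup
      simp [hgx]
    have hytr : y ≤ D.t r := by omega
    have haNr : D.a x y ∈ S.N r := D.h_a_in x y (le_of_lt hy) r hrx hytr
    have hpriv := F.h_priv i j hj
    have hjtr : j ≤ D.t r := le_trans hjy hytr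
    apply hpriv.2.2 r hri hjtr
    rw [hp]
    intro v hv
    simp only [Finset.mem_insert, Finset.mem_singleton] at hv
    rcases hv with rfl | rfl
    · exact hgr
    · exact haNr
  have hix : i ≠ x := by
    rintro rfl
    have : D.Ig g ⊆ {i} := by simpa using hsub
    have := Finset.card_le_card this
    simp [hcard] at this
  have : D.Ig g = {i, x} := by
    apply Finset.eq_of_subset_of_card_le hsub
    rw [hcard, Finset.card_insert_of_notMem (by simpa using hix), Finset.card_singleton]
  rw [this]
  simp

open scoped Classical in
/-- if `|G| ≤ 3m`, then the number of index pairs `(i, j)` with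
`0 ≤ j ≤ t i` such that `p i j` is problematic and its anchor `g = g i j` satisfies
`|I_g| = 2` is at most `6m`. -/
theorem problematic_two_critical_bound {α : Type*} [DecidableEq α]
    (S : NMSystem α) (D : Decomp S) (F : PPFamily D) (hG : D.G.card ≤ 3 * S.m) :
    ((((Finset.univ : Finset (Fin S.ell)).sigma fun i => Finset.range (D.t i + 1)).filter
        (fun q => F.Problematic q.1 q.2 ∧ (D.Ig (F.g q.1 q.2)).card = 2)).card)
      ≤ 6 * S.m := by
  set s := (((Finset.univ : Finset (Fin S.ell)).sigma fun i => Finset.range (D.t i + 1)).filter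
      (fun q => F.Problematic q.1 q.2 ∧ (D.Ig (F.g q.1 q.2)).card = 2)) with hs
  have hmem : ∀ q ∈ s, q.2 ≤ D.t q.1 ∧ F.Problematic q.1 q.2 ∧
      (D.Ig (F.g q.1 q.2)).card = 2 := by
    intro q hq
    simp only [hs, Finset.mem_filter, Finset.mem_sigma, Finset.mem_range] at hq
    exact ⟨by omega, hq.2⟩
  have hmaps : ∀ q ∈ s, F.g q.1 q.2 ∈ D.G := by
    intro q hq
    exact F.h_anchor_G q.1 q.2 (hmem q hq).1
  have key : s.card ≤ 2 * D.G.card := by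
    apply Finset.card_le_mul_card_image_of_maps_to hmaps
    intro b hb
    -- fiber over b maps injectively into Ig b, which has card 2
    by_cases hfib : (s.filter fun q => F.g q.1 q.2 = b).Nonempty
    · obtain ⟨q0, hq0⟩ := hfib
      have hq0s := (Finset.mem_filter.mp hq0).1
      have hq0b := (Finset.mem_filter.mp hq0).2
      have hIb : (D.Ig b).card = 2 := by
        rw [← hq0b]; exact (hmem q0 hq0s).2.2
      calc (s.filter fun q => F.g q.1 q.2 = b).card
          ≤ (D.Ig b).card := by
            apply Finset.card_le_card_of_injOn (fun q => q.1)
            · intro q hq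
              have hqs := (Finset.mem_filter.mp hq).1
              have hqb := (Finset.mem_filter.mp hq).2
              have := anchor_index_mem_Ig F (hmem q hqs).1 (hmem q hqs).2.1
                (hmem q hqs).2.2
              rwa [hqb] at this
            · intro q hq q' hq' h1
              have hqs := (Finset.mem_filter.mp hq).1
              have hq's := (Finset.mem_filter.mp hq').1
              have hqb := (Finset.mem_filter.mp hq).2
              have hq'b := (Finset.mem_filter.mp hq').2
              obtain ⟨i, j⟩ := q
              obtain ⟨i', j'⟩ := q'
              simp only at h1
              subst h1
              have : j = j' := by
                by_contra hne
                exact F.h_anchor_inj i j j' (hmem _ hqs).1 (hmem _ hq's).1 hne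
                  (by simp only at hqb hq'b; rw [hqb, hq'b])
              simp [this]
        _ = 2 := hIb
    · rw [Finset.not_nonempty_iff_eq_empty] at hfib
      simp [hfib]
  calc s.card ≤ 2 * D.G.card := key
    _ ≤ 2 * (3 * S.m) := by omega
    _ = 6 * S.m := by ring
end

section
/- Let m ≥ 3 be an integer and let k = C(m+1,2) + 1. Let A = {a_1, …, a_{k−1}} be a (k−1)-element set and G a finite set disjoint from A with |G| = m + 1, and let p_1, …, p_{k−1} be an enumeration of all 2-element subsets of G. For i = 1, …, k−1 define N_i = (A \ {a_i}) ∪ p_i, and set V = A ∪ G and n = |V|. Then n = C(m+2,2), n − k = m, each N_i is a k-element subset of V, V = N_1 ∪ ⋯ ∪ N_{k−1}, and the family {N_1, …, N_{k−1}} satisfies: (i) N_1 ∩ ⋯ ∩ N_{k−1} = ∅ but for each i the intersection of all N_j with j ≠ i is nonempty; and (ii) every S ⊆ V with |S| ≥ k + 1 contains a 3-element subset T with T ⊄ N_i for all i. Hence it is an (n,m)-system with n = C(m+2,2). -/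
/-- the Szemerédi–Petruska construction: for `m ≥ 3` and
`k = C(m+1,2) + 1`, given a `(k-1)`-set `A = {a 1, …, a (k-1)}` disjoint from an
`(m+1)`-set `G`, and an enumeration `p 1, …, p (k-1)` of all `2`-element subsets of `G`,
the sets `N i = (A \ {a i}) ∪ p i` on `V = A ∪ G` form an `(n,m)`-system with
`n = |V| = C(m+2,2)`. -/
theorem szemeredi_petruska_construction {α : Type*} [DecidableEq α]
    (m : ℕ) (hm : 3 ≤ m) (k : ℕ) (hk : k = Nat.choose (m + 1) 2 + 1)
    (A G : Finset α) (hdisj : Disjoint A G)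
    (hA : A.card = k - 1) (hG : G.card = m + 1)
    (a : Fin (k - 1) → α) (ha_inj : Function.Injective a) (ha_mem : ∀ i, a i ∈ A)
    (p : Fin (k - 1) → Finset α) (hp_inj : Function.Injective p)
    (hp_sub : ∀ i, p i ⊆ G) (hp_card : ∀ i, (p i).card = 2)
    (hp_all : ∀ q ⊆ G, q.card = 2 → ∃ i, q = p i)
    (N : Fin (k - 1) → Finset α) (hN : ∀ i, N i = (A.erase (a i)) ∪ p i)
    (V : Finset α) (hV : V = A ∪ G) (n : ℕ) (hn : n = V.card) :
    n = Nat.choose (m + 2) 2 ∧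
    n - k = m ∧
    (∀ i, N i ⊆ V ∧ (N i).card = k) ∧
    (∀ v ∈ V, ∃ i, v ∈ N i) ∧
    Function.Injective N ∧
    (∀ v : α, ¬ (∀ i, v ∈ N i)) ∧
    (∀ i, ∃ v, ∀ j, j ≠ i → v ∈ N j) ∧
    (∀ S ⊆ V, k + 1 ≤ S.card → ∃ T ⊆ S, T.card = 3 ∧ ∀ i, ¬ T ⊆ N i) := by
  
  have hk6 : 6 ≤ k - 1 := by
    have h := Nat.choose_le_choose 2 (show 4 ≤ m + 1 by omega)
    have h42 : Nat.choose 4 2 = 6 := by decide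
    omega
  have haG : ∀ {x : α}, x ∈ A → x ∉ G := fun h => Finset.disjoint_left.mp hdisj h
  have hGA : ∀ {x : α}, x ∈ G → x ∉ A := fun h => Finset.disjoint_right.mp hdisj h
  -- a is surjective onto A
  have ha_surj : ∀ v ∈ A, ∃ i, v = a i := by
    have himg : Finset.image a Finset.univ = A := by
      apply Finset.eq_of_subset_of_card_le
      · intro x hx
        simp only [Finset.mem_image, Finset.mem_univ, true_and] at hx
        obtain ⟨i, rfl⟩ := hx; exact ha_mem i
      · rw [Finset.card_image_of_injective _ ha_inj, Finset.card_univ, Fintype.card_fin]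
        exact hA.le
    intro v hv
    rw [← himg] at hv
    simp only [Finset.mem_image, Finset.mem_univ, true_and] at hv
    obtain ⟨i, hi⟩ := hv; exact ⟨i, hi.symm⟩
  -- membership in N i via G
  have hNG : ∀ i, ∀ x ∈ G, x ∈ N i → x ∈ p i := by
    intro i x hxG hxN
    rw [hN] at hxN
    rcases Finset.mem_union.1 hxN with h | h
    · exact absurd hxG (haG (Finset.mem_of_mem_erase h))
    · exact h
  have hVcard : V.card = (k - 1) + (m + 1) := by
    rw [hV, Finset.card_union_of_disjoint hdisj, hA, hG]
  have hch : Nat.choose (m + 2) 2 = (m + 1) + Nat.choose (m + 1) 2 := by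
    rw [Nat.choose_succ_succ, Nat.choose_one_right]
  have hNsub : ∀ i, N i ⊆ V := by
    intro i; rw [hN, hV]
    exact Finset.union_subset_union (Finset.erase_subset _ _) (hp_sub i)
  refine ⟨by omega, by omega, ?_, ?_, ?_, ?_, ?_, ?_⟩
  · -- N i ⊆ V and card
    intro i
    refine ⟨hNsub i, ?_⟩
    rw [hN, Finset.card_union_of_disjoint
        (hdisj.mono (Finset.erase_subset _ _) (hp_sub i)),
      Finset.card_erase_of_mem (ha_mem i), hA, hp_card]
    omega
  · -- coverage
    intro v hv
    rw [hV, Finset.mem_union] at hv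
    rcases hv with hv | hv
    · obtain ⟨j, rfl⟩ := ha_surj v hv
      have : ∃ i : Fin (k - 1), i ≠ j := by
        by_cases h0 : j = ⟨0, by omega⟩
        · exact ⟨⟨1, by omega⟩, by simp [h0, Fin.ext_iff]⟩
        · exact ⟨⟨0, by omega⟩, fun h => h0 h.symm⟩
      obtain ⟨i, hij⟩ := this
      refine ⟨i, ?_⟩
      rw [hN, Finset.mem_union]
      exact Or.inl (Finset.mem_erase.2 ⟨fun h => hij (ha_inj h.symm), ha_mem j⟩)
    · have hGe : 1 ≤ (G.erase v).card := by
        rw [Finset.card_erase_of_mem hv, hG]; omega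
      obtain ⟨w, hw⟩ := Finset.card_pos.1 hGe
      have hwv : w ≠ v := (Finset.mem_erase.1 hw).1
      have hq : ({v, w} : Finset α) ⊆ G :=
        Finset.insert_subset hv (Finset.singleton_subset_iff.2 (Finset.mem_of_mem_erase hw))
      have hqc : ({v, w} : Finset α).card = 2 := by
        rw [Finset.card_insert_of_notMem (by simp [Ne.symm hwv]), Finset.card_singleton]
      obtain ⟨i, hi⟩ := hp_all _ hq hqc
      refine ⟨i, ?_⟩
      rw [hN, Finset.mem_union]
      exact Or.inr (hi ▸ Finset.mem_insert_self v {w})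
  · -- injectivity of N
    intro i j hij
    apply hp_inj
    apply Finset.eq_of_subset_of_card_le
    · intro x hx
      exact hNG j x (hp_sub i hx) (hij ▸ ((hN i) ▸ Finset.mem_union_right _ hx))
    · rw [hp_card, hp_card]
  · -- empty total intersection
    intro v hv
    have hvV : v ∈ V := hNsub ⟨0, by omega⟩ (hv _)
    rw [hV, Finset.mem_union] at hvV
    rcases hvV with hvA | hvG
    · obtain ⟨j, rfl⟩ := ha_surj v hvA
      have := hv j
      rw [hN, Finset.mem_union] at this
      rcases this with h | h
      · exact (Finset.notMem_erase _ _) h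
      · exact haG hvA (hp_sub j h)
    · have hGe : 2 ≤ (G.erase v).card := by
        rw [Finset.card_erase_of_mem hvG, hG]; omega
      obtain ⟨q, hq, hqc⟩ := Finset.exists_subset_card_eq hGe
      obtain ⟨i, hi⟩ := hp_all q (hq.trans (Finset.erase_subset _ _)) hqc
      have := hv i
      rw [hN, Finset.mem_union] at this
      rcases this with h | h
      · exact hGA hvG (Finset.mem_of_mem_erase h)
      · exact (Finset.notMem_erase v G) (hq (hi ▸ h))
  · -- near-total intersections nonempty
    intro i
    refine ⟨a i, fun j hji => ?_⟩
    rw [hN, Finset.mem_union]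
    exact Or.inl (Finset.mem_erase.2 ⟨fun h => hji (ha_inj h).symm, ha_mem i⟩)
  · -- condition (ii)
    intro S hS hSc
    have hSAsub : S ∩ A ⊆ A := Finset.inter_subset_right
    have hSA : (S ∩ A).card ≤ k - 1 := hA ▸ Finset.card_le_card hSAsub
    have hsplit : S.card ≤ (S ∩ A).card + (S ∩ G).card := by
      refine le_trans (Finset.card_le_card ?_) (Finset.card_union_le _ _)
      intro x hx
      have := hS hx
      rw [hV, Finset.mem_union] at this
      rcases this with h | h
      · exact Finset.mem_union_left _ (Finset.mem_inter.2 ⟨hx, h⟩)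
      · exact Finset.mem_union_right _ (Finset.mem_inter.2 ⟨hx, h⟩)
    by_cases h3 : 3 ≤ (S ∩ G).card
    · obtain ⟨T, hT, hTc⟩ := Finset.exists_subset_card_eq h3
      refine ⟨T, hT.trans Finset.inter_subset_left, hTc, fun i hTN => ?_⟩
      have : T ⊆ p i := fun x hx =>
        hNG i x (Finset.inter_subset_right (hT hx)) (hTN hx)
      have := Finset.card_le_card this
      rw [hTc, hp_card] at this
      omega
    · have hSG2 : (S ∩ G).card = 2 := by omega
      have hSAeq : S ∩ A = A :=
        Finset.eq_of_subset_of_card_le hSAsub (by omega)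
      obtain ⟨i0, hi0⟩ := hp_all (S ∩ G) Finset.inter_subset_right hSG2
      have hai0 : a i0 ∉ S ∩ G := fun h => haG (ha_mem i0) (Finset.inter_subset_right h)
      refine ⟨insert (a i0) (S ∩ G), ?_, ?_, ?_⟩
      · refine Finset.insert_subset ?_ Finset.inter_subset_left
        have h : a i0 ∈ S ∩ A := by rw [hSAeq]; exact ha_mem i0
        exact (Finset.mem_inter.1 h).1
      · rw [Finset.card_insert_of_notMem hai0, hSG2]
      · intro i hTN
        have h1 : a i0 ∈ N i := hTN (Finset.mem_insert_self _ _)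
        rw [hN, Finset.mem_union] at h1
        rcases h1 with h1 | h1
        · have hne : a i0 ≠ a i := (Finset.mem_erase.1 h1).1
          have hii0 : i ≠ i0 := fun h => hne (by rw [h])
          have hsub : p i0 ⊆ p i := by
            intro x hx
            exact hNG i x (hp_sub i0 hx)
              (hTN (Finset.mem_insert_of_mem (hi0 ▸ hx)))
          have heq : p i0 = p i :=
            Finset.eq_of_subset_of_card_le hsub (by rw [hp_card, hp_card])
          exact hii0 (hp_inj heq).symm
        · exact haG (ha_mem i0) (hp_sub i h1)
end
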